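/- For any centered Gaussian random variable Y on the real line, any real number r, and any ε > 0, the probability P(|Y + r| ≤ ε) is at most P(|Y| ≤ ε). -/

import Mathlib

/-!
Write `f` for the Gaussian density. The mass of the window `[t - ε, t + ε]` minus that of
`[-ε, ε]` is, for `t ≤ 0`, the mass of `[t - ε, -ε]` minus that of its translate by `2ε`,
`[t + ε, ε]`. On `x ≤ -ε` we have `|x + 2ε| ≤ |x|`, so `f x ≤ f (x + 2ε)` because `f` decreases
in `|x|`; the case `t ≥ 0` follows by the symmetry `x ↦ -x`.
-/

open MeasureTheory ProbabilityTheory Metric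

section SymmetricUnimodal

variable {f : ℝ → ℝ}

theorem intervalIntegral_window_le_of_nonpos (hf : ∀ a b, |a| ≤ |b| → f b ≤ f a)
    (hfi : Integrable f) {ε t : ℝ} (hε : 0 ≤ ε) (ht : t ≤ 0) :
    ∫ x in (t - ε)..(t + ε), f x ≤ ∫ x in (-ε)..ε, f x := by
  have hsplit : (∫ x in (t - ε)..(t + ε), f x) - ∫ x in (-ε)..ε, f x
      = (∫ x in (t - ε)..(-ε), f x) - ∫ x in (t + ε)..ε, f x :=
    intervalIntegral.integral_interval_sub_interval_comm hfi.intervalIntegrable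
      hfi.intervalIntegrable hfi.intervalIntegrable
  have hshift : ∫ x in (t + ε)..ε, f x = ∫ x in (t - ε)..(-ε), f (x + 2 * ε) := by
    rw [intervalIntegral.integral_comp_add_right]
    ring_nf
  have hmono : ∫ x in (t - ε)..(-ε), f x ≤ ∫ x in (t - ε)..(-ε), f (x + 2 * ε) := by
    refine intervalIntegral.integral_mono_on (by linarith) hfi.intervalIntegrable
      (hfi.comp_add_right _).intervalIntegrable fun x ⟨_, hx⟩ => hf (x + 2 * ε) x ?_
    rw [abs_of_nonpos (a := x) (by linarith)]
    exact abs_le.mpr ⟨by linarith, by linarith⟩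
  linarith

theorem intervalIntegral_window_le (hf : ∀ a b, |a| ≤ |b| → f b ≤ f a)
    (hfi : Integrable f) {ε : ℝ} (hε : 0 ≤ ε) (t : ℝ) :
    ∫ x in (t - ε)..(t + ε), f x ≤ ∫ x in (-ε)..ε, f x := by
  rcases le_total t 0 with ht | ht
  · exact intervalIntegral_window_le_of_nonpos hf hfi hε ht
  have heven : ∀ x, f (-x) = f x := fun x =>
    le_antisymm (hf _ _ (abs_neg x).ge) (hf _ _ (abs_neg x).le)
  calc ∫ x in (t - ε)..(t + ε), f x
      = ∫ x in (-t - ε)..(-t + ε), f (-x) := by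
        rw [intervalIntegral.integral_comp_neg]
        ring_nf
    _ ≤ ∫ x in (-ε)..ε, f x := by
        simp only [heven]
        exact intervalIntegral_window_le_of_nonpos hf hfi hε (by linarith)

end SymmetricUnimodal

theorem gaussianPDFReal_zero_le_of_abs_le (v : NNReal) {a b : ℝ} (h : |a| ≤ |b|) :
    gaussianPDFReal 0 v b ≤ gaussianPDFReal 0 v a := by
  simp only [gaussianPDFReal, sub_zero, ← sq_abs a, ← sq_abs b]
  gcongr

theorem gaussianReal_closedBall_le (v : NNReal) (t ε : ℝ) :
    gaussianReal 0 v (closedBall t ε) ≤ gaussianReal 0 v (closedBall 0 ε) := by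
  rcases lt_or_ge ε 0 with hε | hε
  · simp [closedBall_eq_empty.2 hε]
  rcases eq_or_ne v 0 with rfl | hv
  · rw [gaussianReal_zero_var, Measure.dirac_apply_of_mem (mem_closedBall_self hε)]
    exact prob_le_one
  rw [gaussianReal_apply_eq_integral _ hv, gaussianReal_apply_eq_integral _ hv,
    Real.closedBall_eq_Icc, Real.closedBall_eq_Icc, integral_Icc_eq_integral_Ioc,
    integral_Icc_eq_integral_Ioc, ← intervalIntegral.integral_of_le (by linarith),
    ← intervalIntegral.integral_of_le (by linarith), zero_sub, zero_add]
  exact ENNReal.ofReal_le_ofReal <| intervalIntegral_window_le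
    (fun _ _ => gaussianPDFReal_zero_le_of_abs_le v)
    (integrable_gaussianPDFReal 0 v) hε t

theorem stmt_0_general {Ω : Type*} [MeasurableSpace Ω] (μ : Measure Ω)
    (Y : Ω → ℝ) (v : NNReal) (hY : Measure.map Y μ = gaussianReal 0 v)
    (r : ℝ) (ε : ℝ) :
    μ {ω | |Y ω + r| ≤ ε} ≤ μ {ω | |Y ω| ≤ ε} := by
  have hYm : AEMeasurable Y μ := aemeasurable_of_map_neZero (by rw [hY]; infer_instance)
  have hball : ∀ t, μ (Y ⁻¹' closedBall t ε) = gaussianReal 0 v (closedBall t ε) := fun t => by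
    rw [← hY, Measure.map_apply_of_aemeasurable hYm measurableSet_closedBall]
  calc μ {ω | |Y ω + r| ≤ ε} = μ (Y ⁻¹' closedBall (-r) ε) := by
        congr 1; ext; simp [Real.dist_eq]
    _ ≤ μ (Y ⁻¹' closedBall 0 ε) := by
        rw [hball, hball]
        exact gaussianReal_closedBall_le v (-r) ε
    _ = μ {ω | |Y ω| ≤ ε} := by
        congr 1; ext; simp

/-- One-dimensional Anderson inequality: for a centered Gaussian random variable `Y`,
any shift `r` and any `ε > 0`, `P(|Y + r| ≤ ε) ≤ P(|Y| ≤ ε)`. -/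
theorem stmt_0 {Ω : Type*} [MeasurableSpace Ω] (μ : Measure Ω) [IsProbabilityMeasure μ]
    (Y : Ω → ℝ) (v : NNReal) (hY : Measure.map Y μ = gaussianReal 0 v)
    (r : ℝ) (ε : ℝ) (hε : 0 < ε) :
    μ {ω | |Y ω + r| ≤ ε} ≤ μ {ω | |Y ω| ≤ ε} :=
  stmt_0_general μ Y v hY r ε
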